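/- With T and δ as above, and f a gauge function with x^{-1}f(x) monotonically decreasing and f(2^{-l_{n+1}}) > 2^{-l_{n+1}·r_n*} for all n: for any A ⊆ 2^ω, if the uniform measure μ(A) > 0 then H^f(δ(A)) > 0. -/

import Mathlib

open Filter Set

noncomputable section

/-- A gauge function: continuous, non-decreasing, positive on ℝ⁺, tending to 0 at 0⁺. -/
def IsGauge (f : ℝ → ℝ) : Prop :=
  ContinuousOn f (Set.Ioi 0) ∧ (∀ x : ℝ, 0 < x → 0 < f x) ∧
  MonotoneOn f (Set.Ioi 0) ∧
  Filter.Tendsto f (nhdsWithin 0 (Set.Ioi 0)) (nhds 0)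

/-- `f ≤* g` : `f ≤ g` on some interval `(0, δ)`. -/
def LeStar (f g : ℝ → ℝ) : Prop := ∃ δ : ℝ, 0 < δ ∧ ∀ x : ℝ, 0 < x → x < δ → f x ≤ g x

/-- `x ↦ f(x)/x` is monotonically decreasing on `(0, ∞)`. -/
def RatioDecreasing (f : ℝ → ℝ) : Prop := AntitoneOn (fun x => f x / x) (Set.Ioi 0)

/-- Codes for partial computable functions relative to an oracle. -/
inductive OCode : Type
  | zero | succ | left | right | oracle
  | pair (a b : OCode) | comp (a b : OCode) | prec (a b : OCode) | rfind' (a : OCode)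

def OCode.eval (g : ℕ →. ℕ) : OCode → ℕ →. ℕ
  | .zero => fun _ => Part.some 0
  | .succ => fun n => Part.some (n + 1)
  | .left => fun n => Part.some n.unpair.1
  | .right => fun n => Part.some n.unpair.2
  | .oracle => g
  | .pair cf cg => fun n => Nat.pair <$> OCode.eval g cf n <*> OCode.eval g cg n
  | .comp cf cg => fun n => OCode.eval g cg n >>= OCode.eval g cf
  | .prec cf cg => Nat.unpaired fun a n =>
      n.rec (OCode.eval g cf a) fun y IH => do
        let i ← IH
        OCode.eval g cg (Nat.pair a (Nat.pair y i))
  | .rfind' cf => Nat.unpaired fun a m =>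
      (Nat.rfind fun n => (fun x => x = 0) <$> OCode.eval g cf (Nat.pair a (n + m))).map (· + m)

def OCode.encode : OCode → ℕ
  | .zero => 0
  | .succ => 1
  | .left => 2
  | .right => 3
  | .oracle => 4
  | .pair a b => 5 + 4 * Nat.pair a.encode b.encode + 0
  | .comp a b => 5 + 4 * Nat.pair a.encode b.encode + 1
  | .prec a b => 5 + 4 * Nat.pair a.encode b.encode + 2
  | .rfind' a => 5 + 4 * a.encode + 3

/-- Evaluation of a code on binary strings, relative to oracle `g`. -/
def strEval (g : ℕ →. ℕ) (c : OCode) (τ : List Bool) : Part (List Bool) :=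
  (c.eval g (Encodable.encode τ)).bind fun n =>
    Part.ofOption (Encodable.decode (α := List Bool) n)

/-- The machine coded by `c` (relative to `g`) is prefix-free. -/
def PrefixFreeCode (g : ℕ →. ℕ) (c : OCode) : Prop :=
  ∀ τ₁ τ₂ : List Bool, (strEval g c τ₁).Dom → (strEval g c τ₂).Dom → τ₁ <+: τ₂ → τ₁ = τ₂

/-- Prefix-free Kolmogorov complexity relative to oracle `g` (via a universal machine
that runs code `c` on input `τ` at cost `encode c + 1 + |τ|`). -/
def Krel (g : ℕ →. ℕ) (σ : List Bool) : ℕ :=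
  sInf { n : ℕ | ∃ c : OCode, PrefixFreeCode g c ∧
    ∃ τ : List Bool, σ ∈ strEval g c τ ∧ n = OCode.encode c + 1 + τ.length }

def emptyOracle : ℕ →. ℕ := fun _ => Part.some 0

/-- Prefix-free Kolmogorov complexity. -/
def K (σ : List Bool) : ℕ := Krel emptyOracle σ

/-- The first `n` bits of `x ∈ 2^ω`. -/
def seg (x : ℕ → Bool) (n : ℕ) : List Bool := List.ofFn (fun i : Fin n => x i)

/-- Effective dimension relative to oracle `g`. -/
def dimRel (g : ℕ →. ℕ) (x : ℕ → Bool) : ℝ :=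
  Filter.liminf (fun n : ℕ => (Krel g (seg x n) : ℝ) / n) Filter.atTop

/-- Effective dimension. -/
def dim (x : ℕ → Bool) : ℝ := dimRel emptyOracle x

/-- The `i`-th binary digit of a real `x ∈ [0,1]`. -/
def digit (x : ℝ) (i : ℕ) : Bool := decide (⌊x * 2 ^ (i + 1)⌋ % 2 = 1)

/-- Effective dimension of a real, via its binary digits. -/
def realDim (x : ℝ) : ℝ := dim (fun i => digit x i)

def Ddim (s : ℝ) : Set (ℕ → Bool) := {x | dim x = s}
def Dle (s : ℝ) : Set (ℕ → Bool) := {x | dim x ≤ s}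
def Dlt (s : ℝ) : Set (ℕ → Bool) := {x | dim x < s}

/-- The cylinder of a string (`∅` for `none`). -/
def cylOpt : Option (List Bool) → Set (ℕ → Bool)
  | none => ∅
  | some σ => {x | ∀ i : ℕ, (h : i < σ.length) → x i = σ.get ⟨i, h⟩}

def gaugeCost (f : ℝ → ℝ) : Option (List Bool) → ENNReal
  | none => 0
  | some σ => ENNReal.ofReal (f ((2 : ℝ) ^ (-(σ.length : ℝ))))

/-- The `f`-Hausdorff measure on Cantor space, via covers by cylinders. -/
def Hf (f : ℝ → ℝ) (A : Set (ℕ → Bool)) : ENNReal :=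
  ⨆ n : ℕ, ⨅ (C : ℕ → Option (List Bool)) (_ : A ⊆ ⋃ i, cylOpt (C i))
    (_ : ∀ i σ, C i = some σ → n ≤ σ.length), ∑' i, gaugeCost f (C i)

/-- The uniform (coin-flipping) outer measure on Cantor space. -/
def muC : Set (ℕ → Bool) → ENNReal := Hf (fun x => x)

/-- Dyadic interval `[j·2^{-n}, (j+1)·2^{-n})` (`∅` for `none`). -/
def dyOpt : Option (ℕ × ℤ) → Set ℝ
  | none => ∅
  | some p => Set.Ico ((p.2 : ℝ) * 2 ^ (-(p.1 : ℤ))) (((p.2 : ℝ) + 1) * 2 ^ (-(p.1 : ℤ)))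

def dyCost (f : ℝ → ℝ) : Option (ℕ × ℤ) → ENNReal
  | none => 0
  | some p => ENNReal.ofReal (f ((2 : ℝ) ^ (-(p.1 : ℤ))))

/-- The `f`-Hausdorff measure on `ℝ`, via covers by dyadic intervals. -/
def HfReal (f : ℝ → ℝ) (B : Set ℝ) : ENNReal :=
  ⨆ m : ℕ, ⨅ (C : ℕ → Option (ℕ × ℤ)) (_ : B ⊆ ⋃ i, dyOpt (C i))
    (_ : ∀ i p, C i = some p → m ≤ p.1), ∑' i, dyCost f (C i)

/-- The canonical map from Cantor space to `[0,1]`. -/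
def piMap (x : ℕ → Bool) : ℝ := ∑' i : ℕ, if x i then ((2 : ℝ) ^ (i + 1))⁻¹ else 0

/-- The set of `s`-well approximable numbers. -/
def W (s : ℝ) : Set ℝ :=
  {x | x ∈ Set.Icc (0 : ℝ) 1 ∧
    {pq : ℤ × ℤ | 0 < pq.2 ∧ |x - (pq.1 : ℝ) / (pq.2 : ℝ)| < (pq.2 : ℝ) ^ (-s)}.Infinite}

/-- `r_{n-1}^*`, with the convention `r_{-1}^* = 1`. -/
def prevR (rstar : ℕ → ℝ) : ℕ → ℝ
  | 0 => 1
  | n + 1 => rstar n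

/-- Level `k` is forced to `0` in the tree `T`. -/
def Forced (rstar : ℕ → ℝ) (l : ℕ → ℕ) (k : ℕ) : Prop :=
  ∃ n : ℕ, rstar n * (l (n + 1) : ℝ) + (1 - prevR rstar n) * (l n : ℝ) ≤ (k : ℝ) ∧ k < l (n + 1)

/-- The set `[T]` of infinite paths through the tree `T`. -/
def TreePaths (rstar : ℕ → ℝ) (l : ℕ → ℕ) : Set (ℕ → Bool) :=
  {x | ∀ k : ℕ, Forced rstar l k → x k = false}

open Classical in
/-- The number of splitting (non-forced) levels of `T` below `k`. -/
def freeCount (rstar : ℕ → ℝ) (l : ℕ → ℕ) (k : ℕ) : ℕ :=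
  ((Finset.range k).filter fun j => ¬ Forced rstar l j).card

open Classical in
/-- The canonical homeomorphism `δ : 2^ω → [T]`, sending the `k`-th bit of `x`
to the `k`-th splitting level of `T`. -/
def deltaMap (rstar : ℕ → ℝ) (l : ℕ → ℕ) (x : ℕ → Bool) : ℕ → Bool :=
  fun k => if Forced rstar l k then false else x (freeCount rstar l k)

/-- The tree `T` as a set of finite strings. -/
def TreeStrings (rstar : ℕ → ℝ) (l : ℕ → ℕ) : Set (List Bool) :=
  {σ | ∀ k : ℕ, (h : k < σ.length) → Forced rstar l k → σ.get ⟨k, h⟩ = false}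

open Classical in
/-- The tree `T` as an oracle. -/
def oracleOfTree (rstar : ℕ → ℝ) (l : ℕ → ℕ) : ℕ →. ℕ :=
  fun m => Part.some
    (if (Encodable.decode (α := List Bool) m).elim False (· ∈ TreeStrings rstar l) then 1 else 0)

end

/-!
Write `a_n = r_n l_{n+1} + (1 - r_{n-1}) l_n`, so that the forced levels of `T` are those in some
`[a_n, l_{n+1})`, and `freeCount m` is the length of the string `τ` with `δ[τ] = [σ]` for `σ ∈ T`
of length `m`.

The heart of the proof is the estimate `c · 2^{-freeCount m} ≤ f(2^{-m})`, `c = min (f 1) 1`,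
proved by induction on `m`. At a splitting level both sides at most halve, since `f(x)/x` is
decreasing. At a forced level `m`, take the forced interval `[a_j, l_{j+1})` containing `m` with the
least `⌈a_j⌉`: every forced level below `a_j` then lies in an earlier interval, and the forced levels
of the first `j` intervals number at most `(1 - r_{j-1}) l_j`; hence `freeCount m ≥ r_j l_{j+1}` and
`2^{-freeCount m} ≤ 2^{-r_j l_{j+1}} < f(2^{-l_{j+1}}) ≤ f(2^{-m})`.

Consequently every cover of `δ(A)` by cylinders `[σ]` pulls back to a cover of `A` by cylinders
`[τ]` whose `μ`-cost is at most `c⁻¹` times the `f`-cost; as `f(0+) = 0`, the estimate also makes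
`freeCount` unbounded, so `H^f(δ A) ≥ c · μ(A)`.
-/

noncomputable def HfLevel (f : ℝ → ℝ) (n : ℕ) (A : Set (ℕ → Bool)) : ENNReal :=
  ⨅ (C : ℕ → Option (List Bool)) (_ : A ⊆ ⋃ i, cylOpt (C i))
    (_ : ∀ i σ, C i = some σ → n ≤ σ.length), ∑' i, gaugeCost f (C i)

theorem Hf_eq_iSup_HfLevel (f : ℝ → ℝ) (A : Set (ℕ → Bool)) :
    Hf f A = ⨆ n, HfLevel f n A := rfl

theorem mul_HfLevel_le_HfLevel_image {f g : ℝ → ℝ} {φ : (ℕ → Bool) → ℕ → Bool} {L : ℕ → ℕ}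
    (hL : Monotone L)
    (hcyl : ∀ σ : List Bool, ∃ τ : List Bool, τ.length = L σ.length ∧
      φ ⁻¹' cylOpt (some σ) ⊆ cylOpt (some τ))
    {c : ENNReal} (hcost : ∀ k : ℕ,
      c * ENNReal.ofReal (g ((2 : ℝ) ^ (-(L k : ℝ)))) ≤ ENNReal.ofReal (f ((2 : ℝ) ^ (-(k : ℝ)))))
    {m n : ℕ} (hmn : m ≤ L n) (A : Set (ℕ → Bool)) :
    c * HfLevel g m A ≤ HfLevel f n (φ '' A) := by
  choose τ hτlen hτcyl using hcyl
  refine le_iInf fun C => le_iInf fun hcov => le_iInf fun hlen => ?_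
  have hcov' : A ⊆ ⋃ i, cylOpt ((C i).map τ) := by
    intro x hx
    obtain ⟨i, hi⟩ := mem_iUnion.1 (hcov ⟨x, hx, rfl⟩)
    cases hCi : C i with
    | none => simp [hCi, cylOpt] at hi
    | some σ =>
      rw [hCi] at hi
      exact mem_iUnion.2 ⟨i, by simpa [hCi] using hτcyl σ hi⟩
  have hlen' : ∀ i τ', (C i).map τ = some τ' → m ≤ τ'.length := by
    intro i τ' h
    obtain ⟨σ, hσ, rfl⟩ := Option.map_eq_some_iff.1 h
    rw [hτlen]
    exact hmn.trans (hL (hlen i σ hσ))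
  have hterm : ∀ i, c * gaugeCost g ((C i).map τ) ≤ gaugeCost f (C i) := by
    intro i
    cases C i with
    | none => simp [gaugeCost]
    | some σ => simpa [gaugeCost, hτlen] using hcost σ.length
  calc c * HfLevel g m A
      ≤ c * ∑' i, gaugeCost g ((C i).map τ) := by
        gcongr
        exact iInf_le_of_le _ (iInf_le_of_le hcov' (iInf_le _ hlen'))
    _ = ∑' i, c * gaugeCost g ((C i).map τ) := ENNReal.tsum_mul_left.symm
    _ ≤ ∑' i, gaugeCost f (C i) := ENNReal.tsum_le_tsum hterm

section ForcedLevels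

variable {rstar : ℕ → ℝ} {l : ℕ → ℕ}

def forcedStart (rstar : ℕ → ℝ) (l : ℕ → ℕ) (n : ℕ) : ℝ :=
  rstar n * l (n + 1) + (1 - prevR rstar n) * l n

noncomputable def forcedLevelsOfFirst (rstar : ℕ → ℝ) (l : ℕ → ℕ) (J : ℕ) : Finset ℕ :=
  (Finset.range J).biUnion fun j => Finset.Ico ⌈forcedStart rstar l j⌉₊ (l (j + 1))

theorem mem_forcedLevelsOfFirst {J k : ℕ} :
    k ∈ forcedLevelsOfFirst rstar l J ↔ ∃ j < J, forcedStart rstar l j ≤ k ∧ k < l (j + 1) := by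
  simp [forcedLevelsOfFirst, Nat.ceil_le]

theorem prevR_le_one (hr1 : ∀ n, rstar n ≤ 1) : ∀ n, prevR rstar n ≤ 1
  | 0 => le_rfl
  | n + 1 => hr1 n

theorem le_prevR (hra : Antitone rstar) (hr1 : ∀ n, rstar n ≤ 1) : ∀ n, rstar n ≤ prevR rstar n
  | 0 => hr1 0
  | n + 1 => hra n.le_succ

theorem forcedStart_le (hra : Antitone rstar) (hr1 : ∀ n, rstar n ≤ 1) (hl : Monotone l)
    (n : ℕ) : forcedStart rstar l n ≤ l (n + 1) := by
  have hp := prevR_le_one hr1 n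
  have hrp := le_prevR hra hr1 n
  have hll : (l n : ℝ) ≤ l (n + 1) := by exact_mod_cast hl n.le_succ
  calc forcedStart rstar l n ≤ rstar n * l (n + 1) + (1 - prevR rstar n) * l (n + 1) := by
        unfold forcedStart; gcongr
    _ ≤ rstar n * l (n + 1) + (1 - rstar n) * l (n + 1) := by gcongr
    _ = l (n + 1) := by ring

theorem card_forcedLevelsOfFirst_le (hra : Antitone rstar) (hr1 : ∀ n, rstar n ≤ 1)
    (hl : Monotone l) (J : ℕ) :
    ((forcedLevelsOfFirst rstar l J).card : ℝ) ≤ (1 - prevR rstar J) * l J := by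
  induction J with
  | zero => simp [forcedLevelsOfFirst, prevR]
  | succ J ih =>
    have hcard : (forcedLevelsOfFirst rstar l (J + 1)).card ≤
        (Finset.Ico ⌈forcedStart rstar l J⌉₊ (l (J + 1))).card +
          (forcedLevelsOfFirst rstar l J).card := by
      rw [forcedLevelsOfFirst, Finset.range_add_one, Finset.biUnion_insert]
      exact Finset.card_union_le _ _
    have hIco : ((Finset.Ico ⌈forcedStart rstar l J⌉₊ (l (J + 1))).card : ℝ) ≤
        l (J + 1) - forcedStart rstar l J := by
      rw [Nat.card_Ico, Nat.cast_sub (Nat.ceil_le.2 (forcedStart_le hra hr1 hl J))]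
      linarith [Nat.le_ceil (forcedStart rstar l J)]
    calc ((forcedLevelsOfFirst rstar l (J + 1)).card : ℝ)
        ≤ (Finset.Ico ⌈forcedStart rstar l J⌉₊ (l (J + 1))).card +
          (forcedLevelsOfFirst rstar l J).card := by exact_mod_cast hcard
      _ ≤ (l (J + 1) - forcedStart rstar l J) + (1 - prevR rstar J) * l J := add_le_add hIco ih
      _ = (1 - prevR rstar (J + 1)) * l (J + 1) := by simp only [forcedStart, prevR]; ring

open Classical in
theorem freeCount_mono : Monotone (freeCount rstar l) := fun _ _ h =>
  Finset.card_le_card (Finset.filter_subset_filter _ (Finset.range_subset_range.2 h))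

theorem freeCount_succ_of_forced {m : ℕ} (hm : Forced rstar l m) :
    freeCount rstar l (m + 1) = freeCount rstar l m := by
  simp [freeCount, Finset.range_add_one, Finset.filter_insert, hm]

theorem freeCount_succ_of_not_forced {m : ℕ} (hm : ¬ Forced rstar l m) :
    freeCount rstar l (m + 1) = freeCount rstar l m + 1 := by
  rw [freeCount, freeCount, Finset.range_add_one, Finset.filter_insert, if_pos hm,
    Finset.card_insert_of_notMem (by simp)]

open Classical in
theorem freeCount_add_card_filter_forced (m : ℕ) :
    freeCount rstar l m + ((Finset.range m).filter (Forced rstar l)).card = m := by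
  rw [freeCount, add_comm, Finset.card_filter_add_card_filter_not, Finset.card_range]

theorem exists_freeCount_eq {i m : ℕ} (hi : i < freeCount rstar l m) :
    ∃ k < m, ¬ Forced rstar l k ∧ freeCount rstar l k = i := by
  induction m with
  | zero => simp [freeCount] at hi
  | succ m ih =>
    by_cases hm : Forced rstar l m
    · rw [freeCount_succ_of_forced hm] at hi
      obtain ⟨k, hk, hkm⟩ := ih hi
      exact ⟨k, hk.trans m.lt_succ_self, hkm⟩
    · rw [freeCount_succ_of_not_forced hm] at hi
      rcases (Nat.lt_succ_iff.1 hi).lt_or_eq with hi | rfl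
      · obtain ⟨k, hk, hkm⟩ := ih hi
        exact ⟨k, hk.trans m.lt_succ_self, hkm⟩
      · exact ⟨m, m.lt_succ_self, hm, rfl⟩

theorem exists_mul_le_freeCount_of_forced (hra : Antitone rstar) (hr1 : ∀ n, rstar n ≤ 1)
    (hl : StrictMono l) {m : ℕ} (hm : Forced rstar l m) :
    ∃ j, m < l (j + 1) ∧ rstar j * l (j + 1) ≤ freeCount rstar l m := by
  classical
  have hP : ∃ c : ℕ, ∃ j, forcedStart rstar l j ≤ c ∧ m < l (j + 1) := ⟨m, hm⟩
  obtain ⟨j, hja, hjm⟩ := Nat.find_spec hP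
  set c := Nat.find hP
  have hsub : (Finset.range c).filter (Forced rstar l) ⊆ forcedLevelsOfFirst rstar l j := by
    intro k hk
    obtain ⟨hkc, j', hj'a, hj'k⟩ := by simpa only [Finset.mem_filter, Finset.mem_range] using hk
    have hj'm : l (j' + 1) ≤ m := not_lt.1 fun h => Nat.find_min hP hkc ⟨j', hj'a, h⟩
    exact mem_forcedLevelsOfFirst.2
      ⟨j', Nat.succ_lt_succ_iff.1 (hl.lt_iff_lt.1 (hj'm.trans_lt hjm)), hj'a, hj'k⟩
  have hcard : (((Finset.range c).filter (Forced rstar l)).card : ℝ) ≤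
      (1 - prevR rstar j) * l j :=
    (Nat.cast_le.2 (Finset.card_le_card hsub)).trans
      (card_forcedLevelsOfFirst_le hra hr1 hl.monotone j)
  have hsplit :
      (freeCount rstar l c : ℝ) + ((Finset.range c).filter (Forced rstar l)).card = c := by
    exact_mod_cast freeCount_add_card_filter_forced c
  refine ⟨j, hjm, ?_⟩
  calc rstar j * l (j + 1) = forcedStart rstar l j - (1 - prevR rstar j) * l j := by
        rw [forcedStart]; ring
    _ ≤ freeCount rstar l c := by linarith
    _ ≤ freeCount rstar l m := by exact_mod_cast freeCount_mono (Nat.find_min' hP hm)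

theorem deltaMap_preimage_cylOpt_subset (σ : List Bool) :
    ∃ τ : List Bool, τ.length = freeCount rstar l σ.length ∧
      deltaMap rstar l ⁻¹' cylOpt (some σ) ⊆ cylOpt (some τ) := by
  by_cases hne : (deltaMap rstar l ⁻¹' cylOpt (some σ)).Nonempty
  · obtain ⟨z, hz⟩ := hne
    refine ⟨seg z (freeCount rstar l σ.length), by simp [seg], fun x hx i hi => ?_⟩
    simp only [seg, List.length_ofFn] at hi
    obtain ⟨k, hk, hkfree, rfl⟩ := exists_freeCount_eq hi
    have hxk := hx k hk
    have hzk := hz k hk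
    simp only [deltaMap, if_neg hkfree] at hxk hzk
    simp [seg, hxk, hzk]
  · refine ⟨List.replicate (freeCount rstar l σ.length) false, by simp, ?_⟩
    rw [Set.not_nonempty_iff_eq_empty.1 hne]
    exact empty_subset _

end ForcedLevels

theorem half_le_of_ratioDecreasing {f : ℝ → ℝ} (hdec : RatioDecreasing f) {x : ℝ} (hx : 0 < x) :
    f x / 2 ≤ f (x / 2) :=
  calc f x / 2 = f x / x * (x / 2) := by field_simp
    _ ≤ f (x / 2) / (x / 2) * (x / 2) :=
        mul_le_mul_of_nonneg_right (hdec (half_pos hx) hx (half_le_self hx.le)) (half_pos hx).le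
    _ = f (x / 2) := div_mul_cancel₀ _ (half_pos hx).ne'

theorem two_rpow_neg_natCast_succ (n : ℕ) :
    (2 : ℝ) ^ (-((n + 1 : ℕ) : ℝ)) = (2 : ℝ) ^ (-(n : ℝ)) / 2 := by
  rw [Nat.cast_succ, neg_add, Real.rpow_add two_pos, Real.rpow_neg_one, div_eq_mul_inv]

theorem tendsto_two_rpow_neg_natCast :
    Tendsto (fun n : ℕ => (2 : ℝ) ^ (-(n : ℝ))) atTop (nhdsWithin 0 (Ioi 0)) := by
  refine tendsto_nhdsWithin_iff.2 ⟨?_, Eventually.of_forall fun n => Real.rpow_pos_of_pos two_pos _⟩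
  simp_rw [Real.rpow_neg two_pos.le, Real.rpow_natCast]
  exact tendsto_inv_atTop_zero.comp (tendsto_pow_atTop_atTop_of_one_lt one_lt_two)

section KeyEstimate

variable {rstar : ℕ → ℝ} {l : ℕ → ℕ} {f : ℝ → ℝ}

theorem min_mul_two_rpow_neg_freeCount_le (hra : Antitone rstar) (hr1 : ∀ n, rstar n ≤ 1)
    (hl : StrictMono l) (hmono : MonotoneOn f (Ioi 0)) (hdec : RatioDecreasing f)
    (hfl : ∀ n : ℕ, f ((2 : ℝ) ^ (-(l (n + 1) : ℝ))) > (2 : ℝ) ^ (-((l (n + 1) : ℝ) * rstar n)))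
    (m : ℕ) :
    min (f 1) 1 * (2 : ℝ) ^ (-(freeCount rstar l m : ℝ)) ≤ f ((2 : ℝ) ^ (-(m : ℝ))) := by
  induction m with
  | zero => simp [freeCount]
  | succ m ih =>
    by_cases hm : Forced rstar l m
    · obtain ⟨j, hjm, hj⟩ := exists_mul_le_freeCount_of_forced hra hr1 hl hm
      have hjm' : ((m + 1 : ℕ) : ℝ) ≤ l (j + 1) := by exact_mod_cast hjm
      rw [freeCount_succ_of_forced hm]
      calc min (f 1) 1 * (2 : ℝ) ^ (-(freeCount rstar l m : ℝ))
          ≤ (2 : ℝ) ^ (-(freeCount rstar l m : ℝ)) :=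
            mul_le_of_le_one_left (by positivity) (min_le_right _ _)
        _ ≤ (2 : ℝ) ^ (-((l (j + 1) : ℝ) * rstar j)) :=
            Real.rpow_le_rpow_of_exponent_le one_le_two (by linarith)
        _ ≤ f ((2 : ℝ) ^ (-(l (j + 1) : ℝ))) := (hfl j).le
        _ ≤ f ((2 : ℝ) ^ (-((m + 1 : ℕ) : ℝ))) :=
            hmono (Real.rpow_pos_of_pos two_pos _) (Real.rpow_pos_of_pos two_pos _)
              (Real.rpow_le_rpow_of_exponent_le one_le_two (neg_le_neg hjm'))
    · rw [freeCount_succ_of_not_forced hm, two_rpow_neg_natCast_succ, two_rpow_neg_natCast_succ]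
      calc min (f 1) 1 * ((2 : ℝ) ^ (-(freeCount rstar l m : ℝ)) / 2)
          = min (f 1) 1 * (2 : ℝ) ^ (-(freeCount rstar l m : ℝ)) / 2 := by ring
        _ ≤ f ((2 : ℝ) ^ (-(m : ℝ))) / 2 := by gcongr
        _ ≤ f ((2 : ℝ) ^ (-(m : ℝ)) / 2) :=
            half_le_of_ratioDecreasing hdec (Real.rpow_pos_of_pos two_pos _)

theorem exists_le_freeCount (hra : Antitone rstar) (hr1 : ∀ n, rstar n ≤ 1)
    (hl : StrictMono l) (hf : IsGauge f) (hdec : RatioDecreasing f)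
    (hfl : ∀ n : ℕ, f ((2 : ℝ) ^ (-(l (n + 1) : ℝ))) > (2 : ℝ) ^ (-((l (n + 1) : ℝ) * rstar n)))
    (n : ℕ) : ∃ N, n ≤ freeCount rstar l N := by
  have hc : 0 < min (f 1) 1 := lt_min (hf.2.1 1 one_pos) one_pos
  have hε : 0 < min (f 1) 1 * (2 : ℝ) ^ (-(n : ℝ)) :=
    mul_pos hc (Real.rpow_pos_of_pos two_pos _)
  obtain ⟨N, hN⟩ :=
    ((hf.2.2.2.comp tendsto_two_rpow_neg_natCast).eventually (gt_mem_nhds hε)).exists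
  refine ⟨N, not_lt.1 fun hlt => ?_⟩
  have hpow : (2 : ℝ) ^ (-(n : ℝ)) ≤ (2 : ℝ) ^ (-(freeCount rstar l N : ℝ)) :=
    Real.rpow_le_rpow_of_exponent_le one_le_two (neg_le_neg (by exact_mod_cast hlt.le))
  have hkey := min_mul_two_rpow_neg_freeCount_le hra hr1 hl hf.2.2.1 hdec hfl N
  have hscaled := mul_le_mul_of_nonneg_left hpow hc.le
  simp only [Function.comp_apply] at hN
  linarith

end KeyEstimate

theorem stmt10_general (s : ℝ)
    (rstar : ℕ → ℝ) (hra : Antitone rstar) (hrm : ∀ n, rstar n ∈ Set.Ioc s 1)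
    (l : ℕ → ℕ) (hl : StrictMono l)
    (f : ℝ → ℝ) (hf : IsGauge f) (hdec : RatioDecreasing f)
    (hfl : ∀ n : ℕ, f ((2 : ℝ) ^ (-(l (n + 1) : ℝ)))
      > (2 : ℝ) ^ (-((l (n + 1) : ℝ) * rstar n))) :
    ∀ A : Set (ℕ → Bool), 0 < muC A → 0 < Hf f (deltaMap rstar l '' A) := by
  intro A hA
  have hr1 : ∀ n, rstar n ≤ 1 := fun n => (hrm n).2
  have hc : 0 < min (f 1) 1 := lt_min (hf.2.1 1 one_pos) one_pos
  have hcost : ∀ k : ℕ, ENNReal.ofReal (min (f 1) 1) *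
      ENNReal.ofReal ((2 : ℝ) ^ (-(freeCount rstar l k : ℝ))) ≤
        ENNReal.ofReal (f ((2 : ℝ) ^ (-(k : ℝ)))) := fun k => by
    rw [← ENNReal.ofReal_mul hc.le]
    exact ENNReal.ofReal_le_ofReal (min_mul_two_rpow_neg_freeCount_le hra hr1 hl hf.2.2.1 hdec hfl k)
  rw [muC, Hf_eq_iSup_HfLevel] at hA
  obtain ⟨n₀, hn₀⟩ := lt_iSup_iff.1 hA
  obtain ⟨n₁, hn₁⟩ := exists_le_freeCount hra hr1 hl hf hdec hfl n₀
  have hpull := mul_HfLevel_le_HfLevel_image (g := fun x => x) freeCount_mono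
    deltaMap_preimage_cylOpt_subset hcost hn₁ A
  rw [Hf_eq_iSup_HfLevel]
  exact lt_iSup_iff.2 ⟨n₁, (ENNReal.mul_pos (ENNReal.ofReal_pos.2 hc).ne' hn₀.ne').trans_le hpull⟩

/-- `δ` sends sets of positive uniform measure to sets of positive
`f`-Hausdorff measure. -/
theorem stmt10 (s : ℝ) (hs0 : 0 ≤ s) (hs1 : s < 1)
    (rstar : ℕ → ℝ) (hra : Antitone rstar) (hrm : ∀ n, rstar n ∈ Set.Ioc s 1)
    (hrt : Filter.Tendsto rstar Filter.atTop (nhds s))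
    (l : ℕ → ℕ) (hl : StrictMono l) (hl0 : l 0 = 0) (hlg : ∀ n : ℕ, 2 ^ n < l (n + 1))
    (f : ℝ → ℝ) (hf : IsGauge f) (hdec : RatioDecreasing f)
    (hfl : ∀ n : ℕ, f ((2 : ℝ) ^ (-(l (n + 1) : ℝ)))
      > (2 : ℝ) ^ (-((l (n + 1) : ℝ) * rstar n))) :
    ∀ A : Set (ℕ → Bool), 0 < muC A → 0 < Hf f (deltaMap rstar l '' A) :=
  stmt10_general s rstar hra hrm l hl f hf hdec hfl
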